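/- For all sufficiently large n and all integers k with j_n ≤ k ≤ n−1, one has the upper bound φ̄^{(n)}_k ≤ a + ((n−k)/2)·(1+(b−a)·p)/n. -/
import Mathlib


/-- Auxiliary sequence for the thresholds `φ^{(n)}_k`, counted backwards from time `n`:
`phiAux b p n m = φ^{(n)}_{n-m}`. -/
noncomputable def phiAux (b p : ℝ) (n : ℕ) : ℕ → ℝ
  | 0 => (1 + b * p) / n
  | m + 1 =>
      (1 / (n : ℝ) ^ 2) * max (n : ℝ) (phiAux b p n m)
        + (p / n) * max b (phiAux b p n m)
        + (1 - p / n - 1 / (n : ℝ) ^ 2) * max 0 (phiAux b p n m)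

/-- The threshold `φ^{(n)}_k`: the expected future reward of the optimal rule at time `k`
given that the value `a` has already been probed.  Defined by `φ^{(n)}_n = (1+b·p)/n` and,
for `1 ≤ k < n`,
`φ^{(n)}_k = (1/n²)·max(n, φ^{(n)}_{k+1}) + (p/n)·max(b, φ^{(n)}_{k+1})
  + (1 − p/n − 1/n²)·max(0, φ^{(n)}_{k+1})`. -/
noncomputable def phi (b p : ℝ) (n k : ℕ) : ℝ := phiAux b p n (n - k)

/-- Auxiliary sequence for the thresholds `φ̄^{(n)}_k`, counted backwards from time `n`:
`phibarAux a b p n m = φ̄^{(n)}_{n-m}`. -/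
noncomputable def phibarAux (a b p : ℝ) (n : ℕ) : ℕ → ℝ
  | 0 => a
  | m + 1 =>
      max a (phiAux b p n m) / ((m : ℝ) + 2)
        + (1 - 1 / ((m : ℝ) + 2)) *
            ((1 / (n : ℝ) ^ 2) * max (n : ℝ) (phibarAux a b p n m)
              + (p / n) * max b (phibarAux a b p n m)
              + (1 - p / n - 1 / (n : ℝ) ^ 2) * max 0 (phibarAux a b p n m))

/-- The threshold `φ̄^{(n)}_k`: the expected future reward of the optimal rule at time `k`
given that the value `a` has not been probed yet.  Defined by `φ̄^{(n)}_n = a` and, for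
`1 ≤ k < n`,
`φ̄^{(n)}_k = max(a, φ^{(n)}_{k+1})/(n+1−k) + (1 − 1/(n+1−k))·[(1/n²)·max(n, φ̄^{(n)}_{k+1})
  + (p/n)·max(b, φ̄^{(n)}_{k+1}) + (1 − p/n − 1/n²)·max(0, φ̄^{(n)}_{k+1})]`. -/
noncomputable def phibar (a b p : ℝ) (n k : ℕ) : ℝ := phibarAux a b p n (n - k)

/-- `j_n`: the earliest time `k ∈ {1,…,n}` with `a ≥ φ^{(n)}_k`. -/
noncomputable def jn (a b p : ℝ) (n : ℕ) : ℕ :=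
  sInf {k : ℕ | 1 ≤ k ∧ k ≤ n ∧ phi b p n k ≤ a}

/-- `k_n`: the earliest time `k ∈ {1,…,n}` with `b ≥ φ^{(n)}_k`. -/
noncomputable def kn (b p : ℝ) (n : ℕ) : ℕ :=
  sInf {k : ℕ | 1 ≤ k ∧ k ≤ n ∧ phi b p n k ≤ b}

/-- `k̄_n`: the earliest time `k ∈ {1,…,n}` with `b ≥ φ̄^{(n)}_k`. -/
noncomputable def kbarn (a b p : ℝ) (n : ℕ) : ℕ :=
  sInf {k : ℕ | 1 ≤ k ∧ k ≤ n ∧ phibar a b p n k ≤ b}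

lemma step_ge (b p : ℝ) (n : ℕ) (hp : 0 ≤ p) (hn0 : (0:ℝ) < n)
    (hc : p / n + 1 / (n:ℝ)^2 ≤ 1) (x : ℝ) :
    x ≤ (1 / (n:ℝ)^2) * max (n:ℝ) x + (p / n) * max b x
        + (1 - p/n - 1/(n:ℝ)^2) * max 0 x := by
  have h1 : (0:ℝ) ≤ 1 / (n:ℝ)^2 := by positivity
  have h2 : (0:ℝ) ≤ p / n := by positivity
  have h3 : (0:ℝ) ≤ 1 - p/n - 1/(n:ℝ)^2 := by linarith
  nlinarith [mul_le_mul_of_nonneg_left (le_max_right (n:ℝ) x) h1,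
             mul_le_mul_of_nonneg_left (le_max_right b x) h2,
             mul_le_mul_of_nonneg_left (le_max_right (0:ℝ) x) h3]

lemma step_le (a b p : ℝ) (n : ℕ) (ha : 0 < a) (hab : a ≤ b) (hp : 0 ≤ p)
    (hn0 : (0:ℝ) < n) (hc : p / n + 1 / (n:ℝ)^2 ≤ 1)
    (x : ℝ) (hax : a ≤ x) (hxn : x ≤ n) :
    (1 / (n:ℝ)^2) * max (n:ℝ) x + (p / n) * max b x
        + (1 - p/n - 1/(n:ℝ)^2) * max 0 x
      ≤ (1 + (b - a) * p) / n + x := by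
  rw [max_eq_left hxn, max_eq_right (le_of_lt (lt_of_lt_of_le ha hax))]
  have hA : (1/(n:ℝ)^2) * (n:ℝ) = 1/(n:ℝ) := by field_simp
  have hB : (1 + (b-a)*p)/(n:ℝ) = 1/(n:ℝ) + b*(p/n) - a*(p/n) := by field_simp; ring
  have h2 : (0:ℝ) ≤ p / n := by positivity
  have h1 : (0:ℝ) ≤ 1 / (n:ℝ)^2 := by positivity
  rcases le_total x b with h | h
  · rw [max_eq_left h]
    nlinarith [mul_le_mul_of_nonneg_left hax h2,
      mul_nonneg h1 (le_of_lt (lt_of_lt_of_le ha hax))]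
  · rw [max_eq_right h]
    have hC : 0 ≤ (b-a)*p := by nlinarith
    have : 1/(n:ℝ) ≤ (1 + (b-a)*p)/n := by
      apply div_le_div_of_nonneg_right ?_ hn0.le; linarith
    nlinarith [mul_nonneg h1 (le_of_lt (lt_of_lt_of_le ha hax))]

lemma phibarAux_succ (a b p : ℝ) (n m : ℕ) :
    phibarAux a b p n (m+1) =
      max a (phiAux b p n m) / ((m : ℝ) + 2)
        + (1 - 1 / ((m : ℝ) + 2)) *
            ((1 / (n : ℝ) ^ 2) * max (n : ℝ) (phibarAux a b p n m)
              + (p / n) * max b (phibarAux a b p n m)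
              + (1 - p / n - 1 / (n : ℝ) ^ 2) * max 0 (phibarAux a b p n m)) := rfl

lemma phiAux_mono (b p : ℝ) (n : ℕ) (hp : 0 ≤ p) (hn0 : (0:ℝ) < n)
    (hc : p / n + 1 / (n:ℝ)^2 ≤ 1) : Monotone (phiAux b p n) := by
  apply monotone_nat_of_le_succ
  intro m
  exact step_ge b p n hp hn0 hc (phiAux b p n m)

set_option maxHeartbeats 2000000 in
/-- for all sufficiently large `n` and all `j_n ≤ k ≤ n − 1`,
`φ̄^{(n)}_k ≤ a + ((n−k)/2)·(1+(b−a)·p)/n`. -/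
theorem stmt_11 (a b p : ℝ)
    (ha : 0 < a) (ha1 : a < 1) (hb : 1 < b) (hp : 0 < p)
    (hlog : Real.log (1 + p * b) < p)
    (hI : (1 + b * p) / (1 + (b - a) * p) * Real.log ((1 + b * p) / (1 + (b - a) * p)) ≤ a * p)
    (hII : (2 - p) * (b - a) < 1)
    (hIII : (1 - (2 - p) * (b - a)) / (1 + p * (b - a))
        < 1 + (1 / p) * Real.log ((1 + p * (b - a)) / (1 + p * b)))
    (hIV : 0 ≤ 2 + p * b * (1 - p * (b - a)))
    (hV : b * p * (1 + (b - a) * p) / ((1 + p * b) * Real.log (1 + p * b)) < 1)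
    :
    ∃ N : ℕ, ∀ n : ℕ, N ≤ n → ∀ k : ℕ, jn a b p n ≤ k → k ≤ n - 1 →
      phibar a b p n k ≤ a + (((n : ℝ) - (k : ℝ)) / 2) * ((1 + (b - a) * p) / n) := by
  refine ⟨⌈(1 + b*p)/a⌉₊ + ⌈p⌉₊ + ⌈a + (1+(b-a)*p)/2⌉₊ + 2, ?_⟩
  intro n hn k hjk hk
  have hn2 : 2 ≤ n := by omega
  have hn0 : (0:ℝ) < n := by positivity
  -- basic real bounds on n
  have hceil1 : ((⌈(1 + b*p)/a⌉₊ : ℕ) : ℝ) ≤ n := by exact_mod_cast Nat.le_of_lt_succ (by omega)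
  have hceil1' : (1 + b*p)/a ≤ (n:ℝ) := le_trans (Nat.le_ceil _) hceil1
  have hceil2 : p + 2 ≤ (n : ℝ) := by
    have h : ((⌈p⌉₊ + 2 : ℕ) : ℝ) ≤ n := by exact_mod_cast (by omega : ⌈p⌉₊ + 2 ≤ n)
    push_cast at h
    linarith [Nat.le_ceil p]
  have hceil3 : a + (1+(b-a)*p)/2 ≤ (n:ℝ) := by
    have : ((⌈a + (1+(b-a)*p)/2⌉₊ : ℕ) : ℝ) ≤ n := by exact_mod_cast Nat.le_of_lt_succ (by omega)
    exact le_trans (Nat.le_ceil _) this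
  have hn1 : (2:ℝ) ≤ n := by exact_mod_cast hn2
  have hc : p / (n:ℝ) + 1 / (n:ℝ)^2 ≤ 1 := by
    have he : p / (n:ℝ) + 1 / (n:ℝ)^2 = (p * n + 1) / (n:ℝ)^2 := by field_simp
    rw [he, div_le_one (by positivity)]
    nlinarith [mul_le_mul_of_nonneg_left hceil2 hn0.le]
  have hna : (1 + b * p) / (n:ℝ) ≤ a := by
    rw [div_le_iff₀ hn0]
    have h1 : 1 + b*p ≤ a * n := by
      have := (div_le_iff₀ ha).mp hceil1'
      linarith
    linarith
  -- the defining set of jn is nonempty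
  have hmem : n ∈ {k : ℕ | 1 ≤ k ∧ k ≤ n ∧ phi b p n k ≤ a} := by
    refine ⟨by omega, le_refl n, ?_⟩
    show phiAux b p n (n - n) ≤ a
    rw [Nat.sub_self]
    exact hna
  have hne : {k : ℕ | 1 ≤ k ∧ k ≤ n ∧ phi b p n k ≤ a}.Nonempty := ⟨n, hmem⟩
  obtain ⟨hj1, hjn, hja⟩ := Nat.sInf_mem hne
  set j := jn a b p n with hjdef
  have hmonophi := phiAux_mono b p n hp.le hn0 hc
  have hphia : ∀ m : ℕ, m ≤ n - j → phiAux b p n m ≤ a := fun m hm =>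
    le_trans (hmonophi hm) hja
  have hC0 : (0:ℝ) ≤ 1 + (b-a)*p := by nlinarith
  -- key induction
  have Key : ∀ m : ℕ, m ≤ n - j →
      a ≤ phibarAux a b p n m ∧
      phibarAux a b p n m ≤ a + (m:ℝ)/2 * ((1 + (b-a)*p)/n) := by
    intro m
    induction m with
    | zero =>
        intro _
        constructor
        · exact le_refl a
        · simp [phibarAux]
    | succ m ih =>
        intro hm
        obtain ⟨h1, h2⟩ := ih (le_trans (Nat.le_succ m) hm)
        set x := phibarAux a b p n m with hxdef
        have hmn : (m:ℝ) ≤ n := by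
          have : m ≤ n := le_trans (le_trans (Nat.le_succ m) hm) (Nat.sub_le n j)
          exact_mod_cast this
        have hu0 : (0:ℝ) ≤ (1 + (b-a)*p)/n := by positivity
        have hid : (1 + (b-a)*p)/(n:ℝ) * n = 1 + (b-a)*p := by field_simp
        have hxn : x ≤ (n:ℝ) := by
          nlinarith [mul_nonneg (sub_nonneg.2 hmn) hu0]
        have hmax : max a (phiAux b p n m) = a :=
          max_eq_left (hphia m (le_trans (Nat.le_succ m) hm))
        have hrec := phibarAux_succ a b p n m
        rw [← hxdef] at hrec
        have hs0 : (0:ℝ) < (m:ℝ) + 2 := by positivity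
        have hs1 : 0 ≤ 1 - 1/((m:ℝ)+2) := by
          rw [sub_nonneg]
          rw [div_le_one hs0]
          linarith [Nat.cast_nonneg (α := ℝ) m]
        have hge := step_ge b p n hp.le hn0 hc x
        have hle := step_le a b p n ha (by linarith : a ≤ b) hp.le hn0 hc x h1 hxn
        constructor
        · rw [hrec, hmax]
          have h3 : a ≤ (1 / (n : ℝ) ^ 2) * max (n : ℝ) x
                    + (p / n) * max b x
                    + (1 - p / n - 1 / (n : ℝ) ^ 2) * max 0 x := le_trans h1 hge
          have h4 := mul_le_mul_of_nonneg_left h3 hs1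
          have hida : a/((m:ℝ)+2) + (1 - 1/((m:ℝ)+2)) * a = a := by
            field_simp
            ring
          linarith
        · rw [hrec, hmax]
          have h4 := mul_le_mul_of_nonneg_left hle hs1
          have h5 : (1 + (b-a)*p)/(n:ℝ) + x
              ≤ (1 + (b-a)*p)/(n:ℝ) + (a + (m:ℝ)/2 * ((1 + (b-a)*p)/n)) := by linarith
          have h6 := mul_le_mul_of_nonneg_left h5 hs1
          have hid2 : a/((m:ℝ)+2) + (1 - 1/((m:ℝ)+2)) *
                ((1 + (b-a)*p)/(n:ℝ) + (a + (m:ℝ)/2 * ((1 + (b-a)*p)/n)))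
              = a + ((m:ℝ)+1)/2 * ((1 + (b-a)*p)/n) := by
            field_simp
            ring
          push_cast
          linarith
  -- conclude
  have hkn : k ≤ n := le_trans hk (Nat.sub_le n 1)
  have hmle : n - k ≤ n - j := Nat.sub_le_sub_left hjk n
  obtain ⟨_, hfin⟩ := Key (n - k) hmle
  have hcast : ((n - k : ℕ) : ℝ) = (n:ℝ) - k := by
    rw [Nat.cast_sub hkn]
  rw [hcast] at hfin
  exact hfin
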